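/- arXiv:2207.01115 — 4 statements merged into one kernel-verified Lean document; each statement's English description precedes it below -/
import Mathlib

section
/- Let ν be a probability measure on a measurable space S, let h : S → [0,∞] be measurable with h(x) < ∞ for ν-almost every x, and let α be a real number with 0 < α ≤ 1. Define the importance weight W : S → [0,∞] by W(x) = (α + (1−α)·h(x))⁻¹. Then for every measurable function F : S → [0,∞], ∫ F dν = α · ∫ W·F dν + (1−α) · ∫ W·F d(ν.withDensity h). That is, the expectation of F under the true transition law equals the α-weighted combination of the W-reweighted expectations under the true law and under the biased law. -/
open MeasureTheory
open scoped ENNReal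

/-! The mixture `α • ν + (1 - α) • ν.withDensity h` is `ν.withDensity (α + (1 - α) h)`, and `W` is
the reciprocal of this density, which is positive everywhere and finite `ν`-a.e. Reweighting by `W`
therefore undoes the change of measure from `ν` to the mixture. -/

namespace MeasureTheory

variable {S : Type*} [MeasurableSpace S]

theorem withDensity_const_add_const_mul (μ : Measure S) (a b : ℝ≥0∞) {h : S → ℝ≥0∞}
    (hh : Measurable h) :
    μ.withDensity (fun x ↦ a + b * h x) = a • μ + b • μ.withDensity h := by
  have hsplit : (fun x ↦ a + b * h x) = (fun _ ↦ a) + b • h := rfl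
  rw [hsplit, withDensity_add_left measurable_const, withDensity_const, withDensity_smul b hh]

theorem lintegral_inv_mul_withDensity (μ : Measure S) {d : S → ℝ≥0∞} (hd : Measurable d)
    (hd_ne_zero : ∀ᵐ x ∂μ, d x ≠ 0) (hd_ne_top : ∀ᵐ x ∂μ, d x ≠ ∞) (F : S → ℝ≥0∞) :
    ∫⁻ x, (d x)⁻¹ * F x ∂μ.withDensity d = ∫⁻ x, F x ∂μ := by
  have hd_inv_lt_top : ∀ᵐ x ∂μ.withDensity d, (d x)⁻¹ < ∞ :=
    (withDensity_absolutelyContinuous μ d).ae_le <| hd_ne_zero.mono fun _ hx ↦ ENNReal.inv_lt_top.2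
      (pos_iff_ne_zero.2 hx)
  calc ∫⁻ x, (d x)⁻¹ * F x ∂μ.withDensity d
      = ∫⁻ x, F x ∂(μ.withDensity d).withDensity (fun x ↦ (d x)⁻¹) :=
        (lintegral_withDensity_eq_lintegral_mul_non_measurable _ hd.inv hd_inv_lt_top F).symm
    _ = ∫⁻ x, F x ∂μ := by rw [withDensity_inv_same hd hd_ne_zero hd_ne_top]

end MeasureTheory

theorem usher_expectation_identity_general
    {S : Type*} [MeasurableSpace S] (ν : Measure S)
    (h : S → ℝ≥0∞) (hmeas : Measurable h) (hfin : ∀ᵐ x ∂ν, h x < ⊤)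
    (α : ℝ) (hα0 : 0 < α)
    (W : S → ℝ≥0∞) (hW : ∀ x, W x = (ENNReal.ofReal α + ENNReal.ofReal (1 - α) * h x)⁻¹) :
    ∀ F : S → ℝ≥0∞, Measurable F →
      ∫⁻ x, F x ∂ν
        = ENNReal.ofReal α * ∫⁻ x, W x * F x ∂ν
          + ENNReal.ofReal (1 - α) * ∫⁻ x, W x * F x ∂(ν.withDensity h) := by
  intro F _
  set a := ENNReal.ofReal α
  set b := ENNReal.ofReal (1 - α)
  have hd : Measurable fun x ↦ a + b * h x := measurable_const.add (measurable_const.mul hmeas)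
  have hd_ne_zero : ∀ᵐ x ∂ν, a + b * h x ≠ 0 :=
    .of_forall fun _ ↦ by simp [a, hα0]
  have hd_ne_top : ∀ᵐ x ∂ν, a + b * h x ≠ ∞ :=
    hfin.mono fun _ hx ↦ by simp [a, b, ENNReal.mul_eq_top, hx.ne]
  simp only [hW]
  rw [← lintegral_inv_mul_withDensity ν hd hd_ne_zero hd_ne_top F,
    withDensity_const_add_const_mul ν a b hmeas, lintegral_add_measure, lintegral_smul_measure,
    lintegral_smul_measure, smul_eq_mul, smul_eq_mul]

/-- **Theorem 2 (USHER), expectation identity.**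
With `ν` the true transition law, `ν.withDensity h` the HER-biased law, and importance
weight `W x = (α + (1-α)·h x)⁻¹`, the expectation of any nonnegative measurable `F`
under the true law equals the `α`-weighted combination of the `W`-reweighted
expectations under the true and biased laws. -/
theorem usher_expectation_identity
    {S : Type*} [MeasurableSpace S] (ν : Measure S) [IsProbabilityMeasure ν]
    (h : S → ℝ≥0∞) (hmeas : Measurable h) (hfin : ∀ᵐ x ∂ν, h x < ⊤)
    (α : ℝ) (hα0 : 0 < α) (hα1 : α ≤ 1)
    (W : S → ℝ≥0∞) (hW : ∀ x, W x = (ENNReal.ofReal α + ENNReal.ofReal (1 - α) * h x)⁻¹) :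
    ∀ F : S → ℝ≥0∞, Measurable F →
      ∫⁻ x, F x ∂ν
        = ENNReal.ofReal α * ∫⁻ x, W x * F x ∂ν
          + ENNReal.ofReal (1 - α) * ∫⁻ x, W x * F x ∂(ν.withDensity h) :=
  usher_expectation_identity_general ν h hmeas hfin α hα0 W hW
end

section
/- Under the stated setup, fix g ∈ G with 0 < m(g) < ∞, let ν = μ.withDensity d be the true transition law, let ν_g = μ.withDensity (fun s' => (k(s',g)/m(g))·d(s')) be the HER-biased transition law given hindsight goal g, and let α be a real number with 0 < α ≤ 1. Define the importance weight W(s') = m(g) / (α·m(g) + (1−α)·k(s',g)). Then for every measurable function F : S → [0,∞], ∫ F dν = α · ∫ W·F dν + (1−α) · ∫ W·F dν_g. -/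
/-!
Since `ν_g = ν.withDensity (k(·, g) / m g)`, both sides are `ν`-integrals, and the right-hand
integrand is `(α W + (1 - α) (k(·, g) / m g) W) F`. The factor in front of `F` equals `1` wherever
`k(·, g)` is finite, which holds `ν`-a.e. because `∫ k(·, g) dν = m g < ∞`.
-/

open MeasureTheory
open scoped ENNReal

theorem ENNReal.mul_div_add_mul_div_mul_div_eq_one {a b M K : ℝ≥0∞} (ha : a ≠ 0) (haT : a ≠ ∞)
    (hbT : b ≠ ∞) (hM : M ≠ 0) (hMT : M ≠ ∞) (hKT : K ≠ ∞) :
    a * (M / (a * M + b * K)) + b * (K / M * (M / (a * M + b * K))) = 1 := by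
  set D := a * M + b * K
  have hD : D ≠ 0 := by simp [D, ha, hM]
  have hDT : D ≠ ∞ := by finiteness
  have hcancel : K / M * (M / D) = K / D := by
    rw [div_eq_mul_inv, div_eq_mul_inv, div_eq_mul_inv, mul_assoc, ← mul_assoc M⁻¹,
      ENNReal.inv_mul_cancel hM hMT, one_mul]
  rw [hcancel, ← mul_div_assoc, ← mul_div_assoc, ENNReal.div_add_div_same,
    ENNReal.div_self hD hDT]

theorem MeasureTheory.lintegral_eq_mul_lintegral_add_mul_lintegral_withDensity
    {S : Type*} [MeasurableSpace S] (ν : Measure S) {r W F : S → ℝ≥0∞} (hr : Measurable r)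
    (hW : Measurable W) (hF : Measurable F) (a b : ℝ≥0∞)
    (h : ∀ᵐ s ∂ν, a * W s + b * (r s * W s) = 1) :
    ∫⁻ s, F s ∂ν = a * ∫⁻ s, W s * F s ∂ν + b * ∫⁻ s, W s * F s ∂ν.withDensity r := by
  have hWF : Measurable fun s => W s * F s := hW.mul hF
  rw [lintegral_withDensity_eq_lintegral_mul _ hr hWF, ← lintegral_const_mul a hWF,
    ← lintegral_const_mul b (hr.mul hWF), ← lintegral_add_left (hWF.const_mul a)]
  refine lintegral_congr_ae (h.mono fun s hs => ?_)
  calc F s = (a * W s + b * (r s * W s)) * F s := by rw [hs, one_mul]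
    _ = a * (W s * F s) + b * (r * fun s => W s * F s) s := by simp only [Pi.mul_apply]; ring

theorem usher_expectation_identity_original_variables_general
    {S G : Type*} [MeasurableSpace S] [MeasurableSpace G]
    (μ : Measure S)
    (d : S → ℝ≥0∞) (hd : Measurable d)
    (k : S → G → ℝ≥0∞) (hk : Measurable (fun p : S × G => k p.1 p.2))
    (m : G → ℝ≥0∞) (hm : ∀ g, m g = ∫⁻ s', k s' g * d s' ∂μ)
    (g : G) (hg0 : 0 < m g) (hgfin : m g < ⊤)
    (ν : Measure S) (hν : ν = μ.withDensity d)
    (ν_g : Measure S) (hνg : ν_g = μ.withDensity (fun s' => (k s' g / m g) * d s'))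
    (α : ℝ) (hα0 : 0 < α)
    (W : S → ℝ≥0∞)
    (hW : ∀ s', W s' = m g / (ENNReal.ofReal α * m g + ENNReal.ofReal (1 - α) * k s' g)) :
    ∀ F : S → ℝ≥0∞, Measurable F →
      ∫⁻ s', F s' ∂ν
        = ENNReal.ofReal α * ∫⁻ s', W s' * F s' ∂ν
          + ENNReal.ofReal (1 - α) * ∫⁻ s', W s' * F s' ∂ν_g := by
  intro F hF
  subst hν hνg
  have hkg : Measurable fun s' => k s' g := hk.comp (measurable_id.prodMk measurable_const)
  have hWm : Measurable W := by
    rw [funext hW]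
    exact measurable_const.div (measurable_const.add (hkg.const_mul _))
  have hk_fin : ∀ᵐ s' ∂μ.withDensity d, k s' g < ∞ := by
    refine ae_lt_top hkg ?_
    rw [lintegral_withDensity_eq_lintegral_mul _ hd hkg]
    simpa only [Pi.mul_apply, mul_comm (d _) (k _ g), ← hm] using hgfin.ne
  rw [show (fun s' => k s' g / m g * d s') = d * fun s' => k s' g / m g from
      funext fun _ => mul_comm _ _, withDensity_mul μ hd (hkg.div_const _)]
  refine lintegral_eq_mul_lintegral_add_mul_lintegral_withDensity _ (hkg.div_const _) hWm hF _ _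
    (hk_fin.mono fun s' hK => ?_)
  rw [hW]
  exact ENNReal.mul_div_add_mul_div_mul_div_eq_one (by simpa using hα0) ENNReal.ofReal_ne_top
    ENNReal.ofReal_ne_top hg0.ne' hgfin.ne hK.ne

/-- **Theorem 2 of the paper in its original variables.**
`ν = μ.withDensity d` is the true transition law, `ν_g` the HER-biased law given a fixed
hindsight goal `g` with `0 < m g < ∞`, and
`W s' = m g / (α·m g + (1-α)·k s' g)` is USHER's importance weight. Then for any
nonnegative measurable `F`, `∫ F dν = α·∫ W·F dν + (1-α)·∫ W·F dν_g`. -/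
theorem usher_expectation_identity_original_variables
    {S G : Type*} [MeasurableSpace S] [MeasurableSpace G]
    (μ : Measure S) (ρ : Measure G) [SigmaFinite μ] [SigmaFinite ρ]
    (d : S → ℝ≥0∞) (hd : Measurable d) (hd1 : ∫⁻ s', d s' ∂μ = 1)
    (k : S → G → ℝ≥0∞) (hk : Measurable (fun p : S × G => k p.1 p.2))
    (hk1 : ∀ s', ∫⁻ g, k s' g ∂ρ = 1)
    (m : G → ℝ≥0∞) (hm : ∀ g, m g = ∫⁻ s', k s' g * d s' ∂μ)
    (g : G) (hg0 : 0 < m g) (hgfin : m g < ⊤)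
    (ν : Measure S) (hν : ν = μ.withDensity d)
    (ν_g : Measure S) (hνg : ν_g = μ.withDensity (fun s' => (k s' g / m g) * d s'))
    (α : ℝ) (hα0 : 0 < α) (hα1 : α ≤ 1)
    (W : S → ℝ≥0∞)
    (hW : ∀ s', W s' = m g / (ENNReal.ofReal α * m g + ENNReal.ofReal (1 - α) * k s' g)) :
    ∀ F : S → ℝ≥0∞, Measurable F →
      ∫⁻ s', F s' ∂ν
        = ENNReal.ofReal α * ∫⁻ s', W s' * F s' ∂ν
          + ENNReal.ofReal (1 - α) * ∫⁻ s', W s' * F s' ∂ν_g :=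
  usher_expectation_identity_original_variables_general μ d hd k hk m hm g hg0 hgfin ν hν ν_g hνg α
    hα0 W hW
end

section
/- Under the stated setup, fix g ∈ G with 0 < m(g) < ∞, let ν = μ.withDensity d, ν_g = μ.withDensity (fun s' => (k(s',g)/m(g))·d(s')), α real with 0 < α ≤ 1, and W(s') = m(g) / (α·m(g) + (1−α)·k(s',g)). Let R : S → [0,∞] and V : S → [0,∞] be measurable (the sparse reward s' ↦ R(s', g_r) and the next-state value s' ↦ Q(s', π(s', g_p), g_r, g_p), respectively) and let γ ∈ [0,∞) be the discount factor. If Q₀ = ∫ (R(s') + γ·V(s')) dν(s') (the Bellman target under the true transition law), then Q₀ = α · ∫ W(s')·(R(s') + γ·V(s')) dν(s') + (1−α) · ∫ W(s')·(R(s') + γ·V(s')) dν_g(s'). That is, the W-reweighted mixture of HER samples and uniformly sampled goals yields an unbiased estimate of the Bellman target. -/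
open MeasureTheory
open scoped ENNReal

/-! Since `ν_g = ν.withDensity (k · g / m g)`, the mixture `α · 𝔼_ν + (1 - α) · 𝔼_{ν_g}` is
integration against `ν` with density `α + (1 - α) · k(·, g) / m g`, and `W` is exactly the
reciprocal of that density wherever `k(·, g)` is finite, which holds `ν`-a.e. because
`∫ k(·, g) dν = m g < ∞`. -/

theorem lintegral_add_lintegral_withDensity {α : Type*} [MeasurableSpace α] (ν : Measure α)
    {p f : α → ℝ≥0∞} (hp : Measurable p) (hf : Measurable f) (a b : ℝ≥0∞) :
    a * ∫⁻ x, f x ∂ν + b * ∫⁻ x, f x ∂(ν.withDensity p) = ∫⁻ x, (a + b * p x) * f x ∂ν := by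
  calc a * ∫⁻ x, f x ∂ν + b * ∫⁻ x, f x ∂(ν.withDensity p)
      = ∫⁻ x, a * f x ∂ν + ∫⁻ x, b * (p x * f x) ∂ν := by
        rw [lintegral_withDensity_eq_lintegral_mul ν hp hf, ← lintegral_const_mul a hf,
          ← lintegral_const_mul b (hp.mul hf)]
        rfl
    _ = ∫⁻ x, (a + b * p x) * f x ∂ν := by
        rw [← lintegral_add_left (hf.const_mul a)]
        congr 1 with x
        ring

theorem ENNReal.add_mul_div_mul_div_add_mul_eq_one {a b m k : ℝ≥0∞} (ha₀ : a ≠ 0)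
    (ha : a ≠ ∞) (hb : b ≠ ∞) (hm₀ : m ≠ 0) (hm : m ≠ ∞) (hk : k ≠ ∞) :
    (a + b * (k / m)) * (m / (a * m + b * k)) = 1 := by
  have h_numerator : (a + b * (k / m)) * m = a * m + b * k := by
    rw [add_mul, mul_assoc, ENNReal.div_mul_cancel hm₀ hm]
  rw [← mul_div_assoc, h_numerator]
  exact ENNReal.div_self (by simp [ha₀, hm₀]) (by finiteness)

theorem usher_unbiased_bellman_target_general
    {S G : Type*} [MeasurableSpace S] [MeasurableSpace G]
    (μ : Measure S)
    (d : S → ℝ≥0∞) (hd : Measurable d)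
    (k : S → G → ℝ≥0∞) (hk : Measurable (fun p : S × G => k p.1 p.2))
    (m : G → ℝ≥0∞) (hm : ∀ g, m g = ∫⁻ s', k s' g * d s' ∂μ)
    (g : G) (hg0 : 0 < m g) (hgfin : m g < ⊤)
    (ν : Measure S) (hν : ν = μ.withDensity d)
    (ν_g : Measure S) (hνg : ν_g = μ.withDensity (fun s' => (k s' g / m g) * d s'))
    (α : ℝ) (hα0 : 0 < α)
    (W : S → ℝ≥0∞)
    (hW : ∀ s', W s' = m g / (ENNReal.ofReal α * m g + ENNReal.ofReal (1 - α) * k s' g))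
    (R : S → ℝ≥0∞) (hR : Measurable R)
    (V : S → ℝ≥0∞) (hV : Measurable V)
    (γ : ℝ)
    (Q₀ : ℝ≥0∞) (hQ₀ : Q₀ = ∫⁻ s', (R s' + ENNReal.ofReal γ * V s') ∂ν) :
    Q₀ = ENNReal.ofReal α * ∫⁻ s', W s' * (R s' + ENNReal.ofReal γ * V s') ∂ν
        + ENNReal.ofReal (1 - α) * ∫⁻ s', W s' * (R s' + ENNReal.ofReal γ * V s') ∂ν_g := by
  obtain rfl : W = _ := funext hW
  have hkg : Measurable (k · g) := hk.comp (measurable_id.prodMk measurable_const)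
  have hνg_withDensity : ν_g = ν.withDensity (k · g / m g) := by
    rw [hνg, hν, ← withDensity_mul μ hd (hkg.div_const _)]
    simp only [Pi.mul_def, mul_comm]
  have hk_fin : ∀ᵐ s' ∂ν, k s' g ≠ ∞ := by
    refine (ae_lt_top hkg ?_).mono fun _ h => h.ne
    rw [hν, lintegral_withDensity_eq_lintegral_mul μ hd hkg]
    simpa [mul_comm, hm g] using hgfin.ne
  rw [hνg_withDensity, lintegral_add_lintegral_withDensity ν (hkg.div_const _) (by fun_prop), hQ₀]
  refine lintegral_congr_ae (hk_fin.mono fun s' hs' => ?_)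
  dsimp only
  rw [← mul_assoc, ENNReal.add_mul_div_mul_div_add_mul_eq_one (by simpa using hα0)
    ENNReal.ofReal_ne_top ENNReal.ofReal_ne_top hg0.ne' hgfin.ne hs', one_mul]

/-- **Corollary 2 of the paper: the unbiased Bellman target used by USHER.**
With `ν = μ.withDensity d` the true transition law, `ν_g` the HER-biased law for a fixed
hindsight goal `g` with `0 < m g < ∞`, importance weight
`W s' = m g / (α·m g + (1-α)·k s' g)`, sparse reward `R`, next-state value `V`, and
discount factor `γ`, the Bellman target `Q₀ = ∫ (R + γ·V) dν` equals the `W`-reweighted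
mixture of the expectation under the true law and under the biased (hindsight) law. -/
theorem usher_unbiased_bellman_target
    {S G : Type*} [MeasurableSpace S] [MeasurableSpace G]
    (μ : Measure S) (ρ : Measure G) [SigmaFinite μ] [SigmaFinite ρ]
    (d : S → ℝ≥0∞) (hd : Measurable d) (hd1 : ∫⁻ s', d s' ∂μ = 1)
    (k : S → G → ℝ≥0∞) (hk : Measurable (fun p : S × G => k p.1 p.2))
    (hk1 : ∀ s', ∫⁻ g, k s' g ∂ρ = 1)
    (m : G → ℝ≥0∞) (hm : ∀ g, m g = ∫⁻ s', k s' g * d s' ∂μ)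
    (g : G) (hg0 : 0 < m g) (hgfin : m g < ⊤)
    (ν : Measure S) (hν : ν = μ.withDensity d)
    (ν_g : Measure S) (hνg : ν_g = μ.withDensity (fun s' => (k s' g / m g) * d s'))
    (α : ℝ) (hα0 : 0 < α) (hα1 : α ≤ 1)
    (W : S → ℝ≥0∞)
    (hW : ∀ s', W s' = m g / (ENNReal.ofReal α * m g + ENNReal.ofReal (1 - α) * k s' g))
    (R : S → ℝ≥0∞) (hR : Measurable R)
    (V : S → ℝ≥0∞) (hV : Measurable V)
    (γ : ℝ) (hγ : 0 ≤ γ)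
    (Q₀ : ℝ≥0∞) (hQ₀ : Q₀ = ∫⁻ s', (R s' + ENNReal.ofReal γ * V s') ∂ν) :
    Q₀ = ENNReal.ofReal α * ∫⁻ s', W s' * (R s' + ENNReal.ofReal γ * V s') ∂ν
        + ENNReal.ofReal (1 - α) * ∫⁻ s', W s' * (R s' + ENNReal.ofReal γ * V s') ∂ν_g :=
  usher_unbiased_bellman_target_general μ d hd k hk m hm g hg0 hgfin ν hν ν_g hνg α hα0 W hW R hR V
    hV γ Q₀ hQ₀
end

section
/- Let κ be a Markov kernel from a measurable space S to itself and let φ : S → G be a measurable map to a measurable space G. For each integer t ≥ 1 let κ^t denote the t-fold composition of κ with itself (κ^1 = κ), and for each integer T ≥ 1 define μ_T : S → Measure G by μ_T(s) = T⁻¹ • ∑_{t=1}^{T} (κ^t s).map φ, the distribution of the achieved goal φ(X_t) at a time t chosen uniformly from {1, …, T} along the Markov chain started from s. Then for every integer T ≥ 2 and every s ∈ S, μ_T(s) = (κ s).bind (fun s' => T⁻¹ • δ_{φ(s')} + ((T−1)/T) • μ_{T−1}(s')). -/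
open MeasureTheory ProbabilityTheory
open scoped ENNReal

/-- `iterKernel κ t` is the `(t+1)`-fold composition of `κ` with itself, so that
`iterKernel κ 0 = κ` is the one-step kernel. -/
noncomputable def iterKernel {S : Type*} [MeasurableSpace S] (κ : Kernel S S) :
    ℕ → Kernel S S
  | 0 => κ
  | (n + 1) => κ ∘ₖ iterKernel κ n

/-- `hindsightGoalDist κ φ T s` is the distribution of the achieved goal `φ(X_t)` at a
time `t` chosen uniformly from `{1, …, T}` along the Markov chain with kernel `κ`
started from `s` (the successor representation over future achieved goals). -/
noncomputable def hindsightGoalDist {S G : Type*} [MeasurableSpace S] [MeasurableSpace G]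
    (κ : Kernel S S) (φ : S → G) (T : ℕ) (s : S) : Measure G :=
  (T : ℝ≥0∞)⁻¹ • ∑ t ∈ Finset.range T, ((iterKernel κ t) s).map φ


/-! Peel off the first step of the chain. The `t = 1` term of `μ_T(s)` is
`(κ s).map φ = (κ s).bind (δ ∘ φ)`, and since `κ^(t+1) = κ^t ∘ₖ κ` the remaining `T - 1` terms are
`(κ s).bind` of the terms of `μ_{T-1}`. As `bind` is additive and `ℝ≥0∞`-linear in the
integrand, the recursion follows, the weights matching because `(T - 1)/T · (T - 1)⁻¹ = T⁻¹`. -/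

namespace MeasureTheory.Measure

variable {α β γ : Type*} [MeasurableSpace α] [MeasurableSpace β] [MeasurableSpace γ]
  {m : Measure α}

theorem measurable_const_smul (c : ℝ≥0∞) : Measurable fun μ : Measure α => c • μ :=
  measurable_of_measurable_coe _ fun s hs => by
    simpa only [smul_apply, smul_eq_mul] using (measurable_coe hs).const_mul c

theorem _root_.AEMeasurable.const_smul_measure {f : α → Measure β} (c : ℝ≥0∞)
    (hf : AEMeasurable f m) : AEMeasurable (fun x => c • f x) m :=
  (measurable_const_smul c).comp_aemeasurable hf

theorem bind_add_right {f g : α → Measure β} (hf : AEMeasurable f m) (hg : AEMeasurable g m) :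
    m.bind (fun x => f x + g x) = m.bind f + m.bind g := by
  ext s hs
  rw [bind_apply (f := fun x => f x + g x) hs (hf.add hg), add_apply, bind_apply hs hf,
    bind_apply hs hg]
  exact lintegral_add_left' ((measurable_coe hs).comp_aemeasurable hf) _

theorem bind_const_smul {f : α → Measure β} (c : ℝ≥0∞) (hf : AEMeasurable f m) :
    m.bind (fun x => c • f x) = c • m.bind f := by
  ext s hs
  rw [bind_apply hs (hf.const_smul_measure c), smul_apply, bind_apply hs hf, smul_eq_mul]
  exact lintegral_const_mul'' c ((measurable_coe hs).comp_aemeasurable hf)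

theorem bind_finsetSum_right {ι : Type*} (t : Finset ι) {f : ι → α → Measure β}
    (hf : ∀ i ∈ t, AEMeasurable (f i) m) :
    m.bind (fun x => ∑ i ∈ t, f i x) = ∑ i ∈ t, m.bind (f i) := by
  ext s hs
  rw [bind_apply (f := fun x => ∑ i ∈ t, f i x) hs (Finset.aemeasurable_fun_sum t hf)]
  simp only [coe_finsetSum, Finset.sum_apply]
  rw [lintegral_finsetSum' (f := fun i x => f i x s) t
    fun i hi => (measurable_coe hs).comp_aemeasurable (hf i hi)]
  exact Finset.sum_congr rfl fun i hi => (bind_apply hs (hf i hi)).symm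

theorem map_bind {f : α → Measure β} {φ : β → γ} (hφ : Measurable φ) (hf : AEMeasurable f m) :
    (m.bind f).map φ = m.bind fun x => (f x).map φ := by
  ext s hs
  rw [map_apply hφ hs, bind_apply (hφ hs) hf,
    bind_apply (f := fun x => (f x).map φ) hs ((measurable_map φ hφ).comp_aemeasurable hf)]
  simp only [map_apply hφ hs]

end MeasureTheory.Measure

section HindsightGoal

open Finset

variable {S G : Type*} [MeasurableSpace S] [MeasurableSpace G] (κ : Kernel S S) {φ : S → G}

theorem iterKernel_succ (t : ℕ) : iterKernel κ (t + 1) = iterKernel κ t ∘ₖ κ := by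
  induction t with
  | zero => rfl
  | succ t ih =>
    show κ ∘ₖ iterKernel κ (t + 1) = (κ ∘ₖ iterKernel κ t) ∘ₖ κ
    rw [ih, Kernel.comp_assoc]

theorem iterKernel_succ_apply (t : ℕ) (s : S) :
    iterKernel κ (t + 1) s = (κ s).bind (iterKernel κ t) := by
  rw [iterKernel_succ, Kernel.comp_apply]

theorem measurable_hindsightGoalDist (hφ : Measurable φ) (T : ℕ) :
    Measurable (hindsightGoalDist κ φ T) :=
  (Measure.measurable_const_smul _).comp <|
    measurable_sum _ fun _ _ => (Measure.measurable_map φ hφ).comp (Kernel.measurable _)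

theorem bind_hindsightGoalDist (hφ : Measurable φ) (T : ℕ) (s : S) :
    (κ s).bind (hindsightGoalDist κ φ T) =
      (T : ℝ≥0∞)⁻¹ • ∑ t ∈ range T, (iterKernel κ (t + 1) s).map φ := by
  have hmap (t : ℕ) : AEMeasurable (fun s' => (iterKernel κ t s').map φ) (κ s) :=
    ((Measure.measurable_map φ hφ).comp (Kernel.measurable _)).aemeasurable
  change (κ s).bind (fun s' => (T : ℝ≥0∞)⁻¹ • ∑ t ∈ range T, (iterKernel κ t s').map φ) = _
  rw [Measure.bind_const_smul _ (aemeasurable_fun_sum _ fun t _ => hmap t),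
    Measure.bind_finsetSum_right _ fun t _ => hmap t]
  congr 1
  refine sum_congr rfl fun t _ => ?_
  rw [iterKernel_succ_apply, Measure.map_bind hφ (Kernel.aemeasurable _)]

end HindsightGoal

theorem hindsightGoalDist_recursion_general
    {S G : Type*} [MeasurableSpace S] [MeasurableSpace G]
    (κ : Kernel S S) (φ : S → G) (hφ : Measurable φ) :
    ∀ T : ℕ, 2 ≤ T → ∀ s : S,
      hindsightGoalDist κ φ T s
        = (κ s).bind (fun s' =>
            (T : ℝ≥0∞)⁻¹ • Measure.dirac (φ s')
              + (((T : ℝ≥0∞) - 1) / T) • hindsightGoalDist κ φ (T - 1) s') := by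
  intro T hT s
  obtain ⟨n, rfl⟩ : ∃ n, T = n + 1 := ⟨T - 1, by omega⟩
  have hn : (n : ℝ≥0∞) ≠ 0 := by exact_mod_cast (by omega : n ≠ 0)
  have hcoef :
      (((n + 1 : ℕ) : ℝ≥0∞) - 1) / (n + 1 : ℕ) * (n : ℝ≥0∞)⁻¹ = ((n + 1 : ℕ) : ℝ≥0∞)⁻¹ := by
    rw [Nat.cast_succ, ENNReal.add_sub_cancel_right ENNReal.one_ne_top, div_eq_mul_inv,
      mul_right_comm, ENNReal.mul_inv_cancel hn (ENNReal.natCast_ne_top n), one_mul]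
  have hdirac : AEMeasurable (fun s' => Measure.dirac (φ s')) (κ s) :=
    (Measure.measurable_dirac.comp hφ).aemeasurable
  have hgoal : AEMeasurable (hindsightGoalDist κ φ n) (κ s) :=
    (measurable_hindsightGoalDist κ hφ n).aemeasurable
  rw [Nat.add_sub_cancel, Measure.bind_add_right (hdirac.const_smul_measure _)
      (hgoal.const_smul_measure _), Measure.bind_const_smul _ hdirac,
    Measure.bind_const_smul _ hgoal, Measure.bind_dirac_eq_map _ hφ,
    bind_hindsightGoalDist κ hφ, smul_smul, hcoef, ← smul_add]
  rw [hindsightGoalDist, Finset.sum_range_succ']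
  exact congrArg _ (add_comm _ _)

/-- **The successor-representation recursion for HER's future goal distribution**
(the Bellman-type equation USHER uses to train the future-goal-density network):
`f(g | s, T) = E_{s'}[ (1/T)·δ_{φ(s')} + (1 − 1/T)·f(g | s', T−1) ]`. -/
theorem hindsightGoalDist_recursion
    {S G : Type*} [MeasurableSpace S] [MeasurableSpace G]
    (κ : Kernel S S) [IsMarkovKernel κ] (φ : S → G) (hφ : Measurable φ) :
    ∀ T : ℕ, 2 ≤ T → ∀ s : S,
      hindsightGoalDist κ φ T s
        = (κ s).bind (fun s' =>
            (T : ℝ≥0∞)⁻¹ • Measure.dirac (φ s')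
              + (((T : ℝ≥0∞) - 1) / T) • hindsightGoalDist κ φ (T - 1) s') :=
  hindsightGoalDist_recursion_general κ φ hφ
end
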